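/- arXiv:1811.01536 — 4 statements merged into one kernel-verified Lean document; each statement's English description precedes it below -/
import Mathlib

section
/- The space of conjugacy classes of pairs (A, B) ∈ SU(2) × SU(2) with [A,B] = -1 (where [A,B] = ABA⁻¹B⁻¹) is a single point, represented by (A,B) = (i σ_x, i σ_z). -/
/-!
The relation `A B A⁻¹ B⁻¹ = -1` says that `A` and `B` anticommute, so conjugation by `B` negates
`A`; hence `tr A = 0`, and Cayley–Hamilton gives `A² = -1`; likewise `B² = -1`.

For `U, V ∈ SU(2)` with `U² = V² = -1` (unit pure quaternions) and `U ≠ -V`, we have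
`(1 - VU) U = U + V = V (1 - VU)`, and `1 - VU`, a nonzero matrix of the form
`!![a, b; -conj b, conj a]`, rescales into `SU(2)`; it commutes with everything that anticommutes
with both `U` and `V`. If `U = -V`, any element anticommuting with `V` conjugates `U` to `V`.
Applied first to move `B` to `iσz`, then to move the image of `A` to `iσx` while fixing `iσz`,
this produces the conjugator.
-/

open Matrix

noncomputable section

def σx : Matrix (Fin 2) (Fin 2) ℂ := !![0, 1; 1, 0]
def σz : Matrix (Fin 2) (Fin 2) ℂ := !![1, 0; 0, -1]

abbrev SU2 := Matrix.specialUnitaryGroup (Fin 2) ℂ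

open Complex ComplexConjugate

local notation "M₂" => Matrix (Fin 2) (Fin 2) ℂ

namespace Matrix

theorem sq_eq_neg_one_of_trace_eq_zero {R : Type*} [CommRing R] [Nontrivial R]
    {M : Matrix (Fin 2) (Fin 2) R} (htr : M.trace = 0) (hdet : M.det = 1) : M ^ 2 = -1 := by
  have h := aeval_self_charpoly M
  rw [charpoly_fin_two, htr, hdet] at h
  simpa [eq_neg_iff_add_eq_zero] using h

theorem trace_eq_zero_of_mul_eq_neg_mul {n K : Type*} [Fintype n] [DecidableEq n] [Field K]
    [CharZero K] {A B : Matrix n n K} (hB : IsUnit B.det) (h : A * B = -(B * A)) :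
    A.trace = 0 := by
  have : A.trace = -A.trace := calc
    A.trace = (A * B * B⁻¹).trace := by rw [mul_nonsing_inv_cancel_right _ _ hB]
    _ = -(B * A * B⁻¹).trace := by rw [h, neg_mul, trace_neg]
    _ = -A.trace := by rw [trace_mul_cycle, nonsing_inv_mul _ hB, one_mul]
  exact self_eq_neg.1 this

theorem commutator_eq_neg_one_iff {n R : Type*} [Fintype n] [DecidableEq n] [CommRing R]
    {A B : Matrix n n R} (hA : IsUnit A.det) (hB : IsUnit B.det) :
    A * B * A⁻¹ * B⁻¹ = -1 ↔ A * B = -(B * A) := by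
  constructor
  · intro h
    calc A * B = A * B * A⁻¹ * B⁻¹ * B * A := by
          rw [nonsing_inv_mul_cancel_right _ _ hB, nonsing_inv_mul_cancel_right _ _ hA]
      _ = -(B * A) := by rw [h, neg_mul, one_mul, neg_mul]
  · intro h
    rw [h, neg_mul, neg_mul, mul_nonsing_inv_cancel_right _ _ hA, mul_nonsing_inv _ hB]

end Matrix

theorem mem_SU2_iff {M : M₂} :
    M ∈ SU2 ↔ ∃ a b : ℂ, normSq a + normSq b = 1 ∧ M = !![a, b; -conj b, conj a] := by
  rw [mem_specialUnitaryGroup_iff, mem_unitaryGroup_iff]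
  constructor
  · rintro ⟨hu, hdet⟩
    have hadj : star M = M.adjugate := by
      rw [← inv_eq_right_inv hu, Matrix.inv_def, hdet, Ring.inverse_one, one_smul]
    have h11 : M 1 1 = conj (M 0 0) := by
      simpa [adjugate_fin_two] using (congrFun (congrFun hadj 0) 0).symm
    have h10 : M 1 0 = -conj (M 0 1) := by
      simpa [adjugate_fin_two, neg_eq_iff_eq_neg] using (congrFun (congrFun hadj 1) 0).symm
    refine ⟨M 0 0, M 0 1, ?_, ?_⟩
    · rw [det_fin_two, h11, h10] at hdet
      have h : ((normSq (M 0 0) + normSq (M 0 1) : ℝ) : ℂ) = 1 := by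
        push_cast [← mul_conj]
        linear_combination hdet
      exact_mod_cast h
    · rw [← h11, ← h10]; exact eta_fin_two M
  · rintro ⟨a, b, hab, rfl⟩
    have hab' : a * conj a + b * conj b = 1 := by rw [mul_conj, mul_conj]; exact_mod_cast hab
    constructor
    · ext i j
      fin_cases i <;> fin_cases j <;>
        simp [mul_apply, Fin.sum_univ_two, star_apply, mul_comm, add_comm, hab']
    · rw [det_fin_two_of]; linear_combination hab'

theorem exists_smul_mem_SU2 {a b : ℂ} (h : a ≠ 0 ∨ b ≠ 0) :
    ∃ c : ℂ, c • !![a, b; -conj b, conj a] ∈ SU2 := by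
  have hs : 0 < normSq a + normSq b := by
    rcases h with h | h
    · exact add_pos_of_pos_of_nonneg (normSq_pos.2 h) (normSq_nonneg b)
    · exact add_pos_of_nonneg_of_pos (normSq_nonneg a) (normSq_pos.2 h)
  set r : ℝ := (Real.sqrt (normSq a + normSq b))⁻¹
  refine ⟨r, mem_SU2_iff.2 ⟨r * a, r * b, ?_, ?_⟩⟩
  · rw [normSq_mul, normSq_mul, normSq_ofReal, ← mul_add, ← sq, inv_pow, Real.sq_sqrt hs.le,
      inv_mul_cancel₀ hs.ne']
  · ext i j
    fin_cases i <;> fin_cases j <;> simp [conj_ofReal]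

theorem exists_smul_one_sub_mem_SU2 {W : M₂} (hW : W ∈ SU2) (hW1 : W ≠ 1) :
    ∃ c : ℂ, c • (1 - W) ∈ SU2 := by
  obtain ⟨a, b, -, rfl⟩ := mem_SU2_iff.1 hW
  have hab : 1 - a ≠ 0 ∨ -b ≠ 0 := by
    by_contra! h
    apply hW1
    rw [← eq_of_sub_eq_zero h.1, neg_eq_zero.1 h.2]
    ext i j
    fin_cases i <;> fin_cases j <;> simp
  obtain ⟨c, hc⟩ := exists_smul_mem_SU2 hab
  refine ⟨c, ?_⟩
  convert hc using 2
  ext i j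
  fin_cases i <;> fin_cases j <;> simp

namespace SU2

theorem isUnit_det (g : SU2) : IsUnit (g : M₂).det := by
  rw [(mem_specialUnitaryGroup_iff.1 g.2).2]; exact isUnit_one

theorem coe_inv (g : SU2) : ((g⁻¹ : SU2) : M₂) = (g : M₂)⁻¹ :=
  (inv_eq_left_inv (mem_unitaryGroup_iff'.1 g.2.1)).symm

theorem coe_conj_eq_neg (g : SU2) {x y : SU2} (h : (x : M₂) = -y) :
    ((g * x * g⁻¹ : SU2) : M₂) = -(g * y * g⁻¹ : SU2) := by
  simp only [Submonoid.coe_mul, h, mul_neg, neg_mul]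

theorem coe_conj_of_semiconjBy {g x y : SU2} (h : SemiconjBy g x y) :
    (g : M₂) * x * (g : M₂)⁻¹ = y := by
  rw [← coe_inv, ← Submonoid.coe_mul, ← Submonoid.coe_mul, h.eq, mul_inv_cancel_right]

theorem sq_eq_neg_one_of_anticommute {U V : SU2} (h : (U : M₂) * V = -(V * U)) :
    (U : M₂) ^ 2 = -1 :=
  sq_eq_neg_one_of_trace_eq_zero (trace_eq_zero_of_mul_eq_neg_mul (isUnit_det V) h)
    (mem_specialUnitaryGroup_iff.1 U.2).2

theorem exists_semiconjBy_of_ne_neg {U V : SU2} (hU : (U : M₂) ^ 2 = -1)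
    (hV : (V : M₂) ^ 2 = -1) (hUV : (U : M₂) ≠ -V) :
    ∃ g : SU2, SemiconjBy g U V ∧
      ∀ W : SU2, (W : M₂) * U = -(U * W) → (W : M₂) * V = -(V * W) → Commute g W := by
  have hVU : (V : M₂) * U ≠ 1 := fun h ↦ hUV <| by
    calc (U : M₂) = -(V ^ 2 * U) := by rw [hV, neg_mul, one_mul, neg_neg]
      _ = -V := by rw [sq, mul_assoc, h, mul_one]
  obtain ⟨c, hc⟩ := exists_smul_one_sub_mem_SU2 (V * U).2 hVU
  refine ⟨⟨_, hc⟩, Subtype.ext ?_, fun W hWU hWV ↦ Subtype.ext ?_⟩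
  · have : (1 - V * U : M₂) * U = V * (1 - V * U) := by
      rw [sub_mul, mul_sub, mul_assoc, ← sq, ← mul_assoc, ← sq, hU, hV]
      noncomm_ring
    simp only [Submonoid.coe_mul, smul_mul_assoc, mul_smul_comm, this]
  · have : Commute (W : M₂) (V * U) := by
      calc (W : M₂) * (V * U) = -(V * (W * U)) := by rw [← mul_assoc, hWV, neg_mul, mul_assoc]
        _ = V * U * W := by rw [hWU, mul_neg, neg_neg, mul_assoc]
    exact (((Commute.one_right _).sub_right this).smul_right c).symm.eq

theorem exists_semiconjBy {U V W : SU2} (hU : (U : M₂) ^ 2 = -1) (hV : (V : M₂) ^ 2 = -1)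
    (hWV : (W : M₂) * V = -(V * W)) :
    ∃ g : SU2, SemiconjBy g U V ∧ ((W : M₂) * U = -(U * W) → Commute g W) := by
  by_cases hUV : (U : M₂) = -V
  · refine ⟨W, Subtype.ext ?_, fun _ ↦ Commute.refl W⟩
    change (W : M₂) * U = V * W
    rw [hUV, mul_neg, hWV, neg_neg]
  · obtain ⟨g, hg, hcomm⟩ := exists_semiconjBy_of_ne_neg hU hV hUV
    exact ⟨g, hg, fun hWU ↦ hcomm W hWU hWV⟩

end SU2

theorem I_smul_σx_mem : I • σx ∈ SU2 :=
  mem_SU2_iff.2 ⟨0, I, by simp, by ext i j; fin_cases i <;> fin_cases j <;> simp [σx]⟩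

theorem I_smul_σz_mem : I • σz ∈ SU2 :=
  mem_SU2_iff.2 ⟨I, 0, by simp, by ext i j; fin_cases i <;> fin_cases j <;> simp [σz]⟩

theorem I_smul_σx_mul_I_smul_σz : (I • σx) * (I • σz) = -((I • σz) * (I • σx)) := by
  ext i j; fin_cases i <;> fin_cases j <;> simp [σx, σz, mul_apply]

/-- The space of conjugacy classes of pairs `(A,B) ∈ SU(2)²` with `[A,B] = -1` is a
single point, represented by `(i σx, i σz)`: the representative satisfies the
relation, and any pair satisfying it is simultaneously conjugate to it. -/
theorem commutator_neg_one_unique_class :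
    (Complex.I • σx ∈ Matrix.specialUnitaryGroup (Fin 2) ℂ ∧
     Complex.I • σz ∈ Matrix.specialUnitaryGroup (Fin 2) ℂ ∧
     (Complex.I • σx) * (Complex.I • σz) * (Complex.I • σx)⁻¹ * (Complex.I • σz)⁻¹ =
       -(1 : Matrix (Fin 2) (Fin 2) ℂ)) ∧
    (∀ A B : SU2,
      (A : Matrix (Fin 2) (Fin 2) ℂ) * B * (A : Matrix (Fin 2) (Fin 2) ℂ)⁻¹ *
          (B : Matrix (Fin 2) (Fin 2) ℂ)⁻¹ = -(1 : Matrix (Fin 2) (Fin 2) ℂ) →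
      ∃ g : SU2,
        (g : Matrix (Fin 2) (Fin 2) ℂ) * A * (g : Matrix (Fin 2) (Fin 2) ℂ)⁻¹ =
          Complex.I • σx ∧
        (g : Matrix (Fin 2) (Fin 2) ℂ) * B * (g : Matrix (Fin 2) (Fin 2) ℂ)⁻¹ =
          Complex.I • σz) := by
  let X : SU2 := ⟨I • σx, I_smul_σx_mem⟩
  let Z : SU2 := ⟨I • σz, I_smul_σz_mem⟩
  have hXZ : (X : M₂) * Z = -(Z * X) := I_smul_σx_mul_I_smul_σz
  have hZX : (Z : M₂) * X = -(X * Z) := (neg_eq_iff_eq_neg.2 hXZ).symm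
  refine ⟨⟨X.2, Z.2, (commutator_eq_neg_one_iff (SU2.isUnit_det X) (SU2.isUnit_det Z)).2 hXZ⟩,
    fun A B hAB ↦ ?_⟩
  have hAB' : (A : M₂) * B = -(B * A) :=
    (commutator_eq_neg_one_iff (SU2.isUnit_det A) (SU2.isUnit_det B)).1 hAB
  have hBA : (B : M₂) * A = -(A * B) := (neg_eq_iff_eq_neg.2 hAB').symm
  obtain ⟨g₁, hg₁B, -⟩ := SU2.exists_semiconjBy (SU2.sq_eq_neg_one_of_anticommute hBA)
    (SU2.sq_eq_neg_one_of_anticommute hZX) hXZ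
  set A₁ := g₁ * A * g₁⁻¹
  have hg₁A : SemiconjBy g₁ A A₁ := (inv_mul_cancel_right _ _).symm
  have hZA₁ : (Z : M₂) * A₁ = -(A₁ * Z) := by
    have h := SU2.coe_conj_eq_neg g₁ (x := B * A) (y := A * B) hBA
    rwa [← conj_mul, ← conj_mul, hg₁B.eq, mul_inv_cancel_right] at h
  obtain ⟨g₂, hg₂A₁, hg₂Z⟩ := SU2.exists_semiconjBy (SU2.sq_eq_neg_one_of_anticommute
    (neg_eq_iff_eq_neg.2 hZA₁).symm) (SU2.sq_eq_neg_one_of_anticommute hXZ) hZX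
  exact ⟨g₂ * g₁, SU2.coe_conj_of_semiconjBy (hg₂A₁.mul_left hg₁A),
    SU2.coe_conj_of_semiconjBy (SemiconjBy.mul_left (hg₂Z hZA₁) hg₁B)⟩
end
end

section
/- For A = r cos α + i σ_x √(1-r²) + i σ_z r sin α and B = cos β + i σ_z sin β with r ∈ [0,1), β ∈ (0,π), the commutator satisfies (1/2) tr([A,B]) = r² + (1-r²) cos 2β, where [A,B] = ABA⁻¹B⁻¹. -/
open Matrix

noncomputable section

/-!
For `det A = 1` the inverse of a `2 × 2` matrix is its adjugate, and a direct computation with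
`B = diag(u, u⁻¹)` gives `tr (A B A⁻¹ B⁻¹) = 2 - A₀₁ A₁₀ (u - u⁻¹)²`.
Here `A₀₁ A₁₀ = -(1 - r²)` and `u - u⁻¹ = 2 i sin β`, so half the trace is
`1 - 2 (1 - r²) sin² β = r² + (1 - r²) cos 2β`.
-/

theorem Matrix.inv_diagonal_fin_two {R : Type*} [CommRing R] {u v : R} (huv : u * v = 1) :
    (diagonal ![u, v])⁻¹ = diagonal ![v, u] := by
  refine inv_eq_right_inv ?_
  rw [diagonal_mul_diagonal, ← diagonal_one]
  congr 1
  ext i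
  fin_cases i <;> simp [huv, mul_comm v u]

theorem Matrix.trace_mul_diagonal_mul_inv_mul_inv {R : Type*} [CommRing R]
    {A : Matrix (Fin 2) (Fin 2) R} (hA : A.det = 1) {u v : R} (huv : u * v = 1) :
    trace (A * diagonal ![u, v] * A⁻¹ * (diagonal ![u, v])⁻¹) =
      2 - A 0 1 * A 1 0 * (u - v) ^ 2 := by
  rw [inv_def, hA, Ring.inverse_one, one_smul, inv_diagonal_fin_two huv, adjugate_fin_two]
  rw [det_fin_two] at hA
  simp only [trace_fin_two, mul_apply, Fin.sum_univ_two, diagonal_apply, of_apply, cons_val',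
    cons_val_zero, cons_val_one, empty_val', cons_val_fin_one, Fin.isValue, ite_true,
    Fin.zero_eq_one_iff, Fin.one_eq_zero_iff, OfNat.ofNat_ne_one, ite_false, mul_zero,
    add_zero, zero_add]
  linear_combination (2 * u * v) * hA + 2 * huv

theorem smul_one_add_smul_σx_add_smul_σz (a b c : ℂ) :
    a • (1 : Matrix (Fin 2) (Fin 2) ℂ) + (Complex.I * b) • σx + (Complex.I * c) • σz =
      !![a + Complex.I * c, Complex.I * b; Complex.I * b, a - Complex.I * c] := by
  ext i j
  fin_cases i <;> fin_cases j <;> simp [σx, σz, one_apply]; ring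

theorem smul_one_add_smul_σz (a c : ℂ) :
    a • (1 : Matrix (Fin 2) (Fin 2) ℂ) + (Complex.I * c) • σz =
      diagonal ![a + Complex.I * c, a - Complex.I * c] := by
  ext i j
  fin_cases i <;> fin_cases j <;> simp [σz, one_apply]; ring

theorem trace_commutator_smul_one_add_smul_σx_add_smul_σz {a b c x y : ℂ}
    (habc : a ^ 2 + b ^ 2 + c ^ 2 = 1) (hxy : x ^ 2 + y ^ 2 = 1) :
    trace ((a • 1 + (Complex.I * b) • σx + (Complex.I * c) • σz) *
        (x • 1 + (Complex.I * y) • σz) *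
        (a • 1 + (Complex.I * b) • σx + (Complex.I * c) • σz)⁻¹ *
        (x • 1 + (Complex.I * y) • σz)⁻¹) =
      2 - 4 * b ^ 2 * y ^ 2 := by
  have hdet : det !![a + Complex.I * c, Complex.I * b; Complex.I * b, a - Complex.I * c] = 1 := by
    rw [det_fin_two_of]
    linear_combination -(b ^ 2 + c ^ 2) * Complex.I_sq + habc
  have huv : (x + Complex.I * y) * (x - Complex.I * y) = 1 := by
    linear_combination -y ^ 2 * Complex.I_sq + hxy
  rw [smul_one_add_smul_σx_add_smul_σz, smul_one_add_smul_σz,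
    trace_mul_diagonal_mul_inv_mul_inv hdet huv]
  simp only [of_apply, cons_val', cons_val_zero, cons_val_one, empty_val', cons_val_fin_one]
  linear_combination -4 * b ^ 2 * y ^ 2 * (Complex.I ^ 2 - 1) * Complex.I_sq

theorem half_trace_commutator_general (r α β : ℝ) (hr : r ∈ Set.Ico (0 : ℝ) 1)
    (A B : Matrix (Fin 2) (Fin 2) ℂ)
    (hA : A = ((r * Real.cos α : ℝ) : ℂ) • (1 : Matrix (Fin 2) (Fin 2) ℂ) +
      (Complex.I * ((Real.sqrt (1 - r ^ 2) : ℝ) : ℂ)) • σx +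
      (Complex.I * ((r * Real.sin α : ℝ) : ℂ)) • σz)
    (hB : B = ((Real.cos β : ℝ) : ℂ) • (1 : Matrix (Fin 2) (Fin 2) ℂ) +
      (Complex.I * ((Real.sin β : ℝ) : ℂ)) • σz) :
    (1 / 2 : ℂ) * Matrix.trace (A * B * A⁻¹ * B⁻¹) =
      ((r ^ 2 + (1 - r ^ 2) * Real.cos (2 * β) : ℝ) : ℂ) := by
  have hS : Real.sqrt (1 - r ^ 2) ^ 2 = 1 - r ^ 2 := Real.sq_sqrt (by nlinarith [hr.1, hr.2])
  have hA_unit : (r * Real.cos α) ^ 2 + Real.sqrt (1 - r ^ 2) ^ 2 + (r * Real.sin α) ^ 2 = 1 := by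
    linear_combination hS + r ^ 2 * Real.cos_sq_add_sin_sq α
  have hB_unit : Real.cos β ^ 2 + Real.sin β ^ 2 = 1 := Real.cos_sq_add_sin_sq β
  rw [hA, hB, trace_commutator_smul_one_add_smul_σx_add_smul_σz (by exact_mod_cast hA_unit)
    (by exact_mod_cast hB_unit)]
  have key : 1 / 2 * (2 - 4 * Real.sqrt (1 - r ^ 2) ^ 2 * Real.sin β ^ 2) =
      r ^ 2 + (1 - r ^ 2) * Real.cos (2 * β) := by
    linear_combination -2 * Real.sin β ^ 2 * hS - (1 - r ^ 2) * Real.cos_two_mul β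
      - 2 * (1 - r ^ 2) * hB_unit
  rw [← key]
  push_cast
  ring

/-- For `A = r cos α + i σx √(1-r²) + i σz r sin α`, `B = cos β + i σz sin β`
with `r ∈ [0,1)`, `β ∈ (0,π)`, one has `(1/2) tr([A,B]) = r² + (1-r²) cos 2β`. -/
theorem half_trace_commutator (r α β : ℝ) (hr : r ∈ Set.Ico (0 : ℝ) 1)
    (hβ : β ∈ Set.Ioo (0 : ℝ) Real.pi)
    (A B : Matrix (Fin 2) (Fin 2) ℂ)
    (hA : A = ((r * Real.cos α : ℝ) : ℂ) • (1 : Matrix (Fin 2) (Fin 2) ℂ) +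
      (Complex.I * ((Real.sqrt (1 - r ^ 2) : ℝ) : ℂ)) • σx +
      (Complex.I * ((r * Real.sin α : ℝ) : ℂ)) • σz)
    (hB : B = ((Real.cos β : ℝ) : ℂ) • (1 : Matrix (Fin 2) (Fin 2) ℂ) +
      (Complex.I * ((Real.sin β : ℝ) : ℂ)) • σz) :
    (1 / 2 : ℂ) * Matrix.trace (A * B * A⁻¹ * B⁻¹) =
      ((r ^ 2 + (1 - r ^ 2) * Real.cos (2 * β) : ℝ) : ℂ) :=
  half_trace_commutator_general r α β hr A B hA hB
end
end

section
/- Let t ∈ (-1,1). For A and B as in equation A = ((t-cos 2β)/(1-cos 2β))^{1/2}(cos α + i σ_z sin α) + i σ_x ((1-t)/(1-cos 2β))^{1/2} and B = cos β + i σ_z sin β, with β ∈ [β₀, π-β₀] where β₀ = (1/2)cos⁻¹t, the commutator equals [A,B] = t + i √(1-t²) v̂(α,β)·σ⃗, where v̂(α,β) = (√(1-z²) sin(α+β), √(1-z²) cos(α+β), z) and z = -√((1-t)/(1+t)) cot β. -/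
/-!
Write `R θ = cos θ + i sin θ σz = exp (iθσz)`, so that `A = c R α + i s σx` and `B = R β` with
`c² + s² = 1`. As `σx` anticommutes with `σz`, `σx R θ = R (-θ) σx`, hence
`A⁻¹ = c R (-α) - i s σx`. Pushing every `σx` to the right collapses the commutator to
`c² + s² R (-2β) + i c s (R α - R (α + 2β)) σx`, a scalar plus `i` times a Pauli vector.
For the given `c, s` the scalar part is `t` and the Pauli vector is `√(1 - t²) v̂`; the range of `β`
is exactly what makes `cos 2β ≤ t`, so that `c` is a genuine square root.
-/

open Matrix Real

noncomputable section

def σy : Matrix (Fin 2) (Fin 2) ℂ := !![0, -Complex.I; Complex.I, 0]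
def dotPauli (v : Fin 3 → ℝ) : Matrix (Fin 2) (Fin 2) ℂ :=
  (v 0 : ℂ) • σx + (v 1 : ℂ) • σy + (v 2 : ℂ) • σz

lemma ofReal_smul_dotPauli (r : ℝ) (v : Fin 3 → ℝ) :
    (r : ℂ) • dotPauli v = dotPauli (r • v) := by
  simp only [dotPauli, smul_add, smul_smul, Pi.smul_apply, smul_eq_mul, Complex.ofReal_mul]

lemma σx_mul_self : σx * σx = 1 := by
  simp [σx, Matrix.one_fin_two]

def rotZ (θ : ℝ) : Matrix (Fin 2) (Fin 2) ℂ :=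
  ((cos θ : ℝ) : ℂ) • 1 + (Complex.I * ((sin θ : ℝ) : ℂ)) • σz

lemma rotZ_eq (θ : ℝ) :
    rotZ θ = !![Complex.exp (θ * Complex.I), 0; 0, Complex.exp (↑(-θ) * Complex.I)] := by
  rw [rotZ, Complex.exp_mul_I, Complex.exp_mul_I]
  ext i j
  fin_cases i <;> fin_cases j <;> simp [σz] <;> ring

lemma rotZ_zero : rotZ 0 = 1 := by
  simp [rotZ]

lemma rotZ_mul_rotZ (a b : ℝ) : rotZ a * rotZ b = rotZ (a + b) := by
  simp only [rotZ_eq, Matrix.mul_fin_two, ← Complex.exp_add]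
  push_cast
  ring_nf

lemma rotZ_mul_rotZ_mul (a b : ℝ) (M : Matrix (Fin 2) (Fin 2) ℂ) :
    rotZ a * (rotZ b * M) = rotZ (a + b) * M := by
  rw [← mul_assoc, rotZ_mul_rotZ]

lemma rotZ_inv (θ : ℝ) : (rotZ θ)⁻¹ = rotZ (-θ) :=
  Matrix.inv_eq_right_inv (by rw [rotZ_mul_rotZ, add_neg_cancel, rotZ_zero])

lemma σx_mul_rotZ (θ : ℝ) : σx * rotZ θ = rotZ (-θ) * σx := by
  simp [σx, rotZ_eq]

lemma rotZ_mul_σx (θ : ℝ) :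
    rotZ θ * σx = ((cos θ : ℝ) : ℂ) • σx - ((sin θ : ℝ) : ℂ) • σy := by
  ext i j
  fin_cases i <;> fin_cases j <;>
    simp [rotZ, σx, σy, σz, Matrix.one_fin_two] <;> ring

def rotZX (c s α : ℝ) : Matrix (Fin 2) (Fin 2) ℂ :=
  (c : ℂ) • rotZ α + (Complex.I * s) • σx

lemma rotZX_mul_rotZX_neg {c s : ℝ} (h : c ^ 2 + s ^ 2 = 1) (α : ℝ) :
    rotZX c s α * rotZX c (-s) (-α) = 1 := by
  have h' : (c : ℂ) ^ 2 + (s : ℂ) ^ 2 = 1 := by exact_mod_cast h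
  simp only [rotZX, add_mul, mul_add, smul_mul_smul_comm, rotZ_mul_rotZ, σx_mul_rotZ, σx_mul_self,
    add_neg_cancel, neg_neg, rotZ_zero]
  push_cast
  linear_combination (norm := module)
    (h' - (s : ℂ) ^ 2 * Complex.I_sq) • (1 : Matrix (Fin 2) (Fin 2) ℂ)

lemma rotZX_inv {c s : ℝ} (h : c ^ 2 + s ^ 2 = 1) (α : ℝ) :
    (rotZX c s α)⁻¹ = rotZX c (-s) (-α) :=
  Matrix.inv_eq_right_inv (rotZX_mul_rotZX_neg h α)

lemma cos_sub_cos_add_two_mul (α β : ℝ) :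
    cos α - cos (α + 2 * β) = 2 * sin (α + β) * sin β := by
  rw [Real.cos_sub_cos, show (α + (α + 2 * β)) / 2 = α + β by ring,
    show (α - (α + 2 * β)) / 2 = -β by ring, Real.sin_neg]
  ring

lemma sin_add_two_mul_sub_sin (α β : ℝ) :
    sin (α + 2 * β) - sin α = 2 * cos (α + β) * sin β := by
  rw [Real.sin_sub_sin, show (α + 2 * β - α) / 2 = β by ring,
    show (α + 2 * β + α) / 2 = α + β by ring]
  ring

lemma rotZX_commutator_rotZ {c s : ℝ} (h : c ^ 2 + s ^ 2 = 1) (α β : ℝ) :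
    rotZX c s α * rotZ β * (rotZX c s α)⁻¹ * (rotZ β)⁻¹ =
      ((c ^ 2 + s ^ 2 * cos (2 * β) : ℝ) : ℂ) • 1 + Complex.I • dotPauli
        ![2 * c * s * sin β * sin (α + β), 2 * c * s * sin β * cos (α + β),
          -(s ^ 2 * sin (2 * β))] := by
  have hcos : ((cos α : ℝ) : ℂ) - ((cos (α + 2 * β) : ℝ) : ℂ) =
      2 * ((sin (α + β) : ℝ) : ℂ) * ((sin β : ℝ) : ℂ) := by
    exact_mod_cast cos_sub_cos_add_two_mul α β
  have hsin : ((sin (α + 2 * β) : ℝ) : ℂ) - ((sin α : ℝ) : ℂ) =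
      2 * ((cos (α + β) : ℝ) : ℂ) * ((sin β : ℝ) : ℂ) := by
    exact_mod_cast sin_add_two_mul_sub_sin α β
  calc rotZX c s α * rotZ β * (rotZX c s α)⁻¹ * (rotZ β)⁻¹
      = ((c : ℂ) ^ 2) • 1 + ((s : ℂ) ^ 2) • rotZ (-(2 * β)) +
          (Complex.I * c * s) • (rotZ α * σx - rotZ (α + 2 * β) * σx) := by
        rw [rotZX_inv h, rotZ_inv]
        simp only [rotZX, add_mul, mul_add, smul_mul_assoc, mul_smul_comm, mul_assoc,
          rotZ_mul_rotZ, rotZ_mul_rotZ_mul, σx_mul_rotZ, σx_mul_self, mul_one]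
        ring_nf
        rw [rotZ_zero]
        push_cast
        linear_combination (norm := module) (-(s : ℂ) ^ 2 * Complex.I_sq) • rotZ (-(β * 2))
    _ = _ := by
        rw [rotZ_mul_σx, rotZ_mul_σx]
        simp only [rotZ, dotPauli, Real.cos_neg, Real.sin_neg, Matrix.cons_val]
        push_cast
        linear_combination (norm := module)
          (Complex.I * c * s * hcos) • σx + (Complex.I * c * s * hsin) • σy

section Coefficients

variable {t u : ℝ}

lemma sq_sqrt_add_sq_sqrt_eq_one (hut : u ≤ t) (ht : t ≤ 1) (hu : u < 1) :
    √((t - u) / (1 - u)) ^ 2 + √((1 - t) / (1 - u)) ^ 2 = 1 := by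
  have hu' : 0 < 1 - u := by linarith
  rw [Real.sq_sqrt (by positivity), Real.sq_sqrt (by positivity)]
  field_simp
  ring

lemma sq_sqrt_add_sq_sqrt_mul_eq (hut : u ≤ t) (ht : t ≤ 1) (hu : u < 1) :
    √((t - u) / (1 - u)) ^ 2 + √((1 - t) / (1 - u)) ^ 2 * u = t := by
  have hu' : 0 < 1 - u := by linarith
  rw [Real.sq_sqrt (by positivity), Real.sq_sqrt (by positivity)]
  field_simp
  ring

lemma sqrt_one_sub_sq_mul_sqrt_div (ht : t ∈ Set.Ioc (-1) 1) :
    √(1 - t ^ 2) * √((1 - t) / (1 + t)) = 1 - t := by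
  obtain ⟨ht₁, ht₂⟩ := ht
  have h1t : 0 < 1 + t := by linarith
  rw [← Real.sqrt_mul (by nlinarith), show (1 - t ^ 2) * ((1 - t) / (1 + t)) = (1 - t) ^ 2 by
    field_simp; ring, Real.sqrt_sq (by linarith)]

end Coefficients

lemma one_sub_cos_two_mul (x : ℝ) : 1 - cos (2 * x) = 2 * sin x ^ 2 := by
  rw [Real.cos_two_mul']
  linear_combination -Real.sin_sq_add_cos_sq x

section AngleRange

variable {t β : ℝ}

lemma sin_pos_of_mem_Icc_half_arccos (ht : t < 1)
    (hβ : β ∈ Set.Icc ((1 / 2) * arccos t) (π - (1 / 2) * arccos t)) :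
    0 < sin β := by
  have ha := Real.arccos_pos.2 ht
  exact Real.sin_pos_of_pos_of_lt_pi (by linarith [hβ.1]) (by linarith [hβ.2])

lemma cos_two_mul_le_of_mem_Icc_half_arccos (ht : t ∈ Set.Icc (-1) 1)
    (hβ : β ∈ Set.Icc ((1 / 2) * arccos t) (π - (1 / 2) * arccos t)) :
    cos (2 * β) ≤ t := by
  obtain ⟨hβ₁, hβ₂⟩ := hβ
  have ha₀ := Real.arccos_nonneg t
  rw [← Real.cos_arccos ht.1 ht.2]
  rcases le_total (2 * β) π with h | h
  · exact Real.cos_le_cos_of_nonneg_of_le_pi ha₀ h (by linarith)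
  · rw [← Real.cos_two_pi_sub]
    exact Real.cos_le_cos_of_nonneg_of_le_pi ha₀ (by linarith) (by linarith)

end AngleRange

section Cotangent

variable {t β z : ℝ}

lemma one_sub_sq_of_eq_cot (ht : t ∈ Set.Ioc (-1) 1) (hβ : sin β ≠ 0)
    (hz : z = -√((1 - t) / (1 + t)) * (cos β / sin β)) :
    1 - z ^ 2 = (t - cos (2 * β)) / ((1 + t) * sin β ^ 2) := by
  obtain ⟨ht₁, ht₂⟩ := ht
  have h1t : 0 < 1 + t := by linarith
  rw [hz, mul_pow, neg_sq, Real.sq_sqrt (div_nonneg (by linarith) h1t.le), Real.cos_two_mul']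
  field_simp
  linear_combination t * Real.sin_sq_add_cos_sq β

lemma sqrt_one_sub_sq_mul_eq_cot (ht : t ∈ Set.Ioc (-1) 1) (hβ : sin β ≠ 0)
    (hz : z = -√((1 - t) / (1 + t)) * (cos β / sin β)) :
    √(1 - t ^ 2) * z = -(√((1 - t) / (1 - cos (2 * β))) ^ 2 * sin (2 * β)) := by
  have hs : 0 ≤ (1 - t) / (1 - cos (2 * β)) := by
    rw [one_sub_cos_two_mul]; exact div_nonneg (by linarith [ht.2]) (by positivity)
  rw [hz, Real.sq_sqrt hs, one_sub_cos_two_mul, Real.sin_two_mul, neg_mul, mul_neg, ← mul_assoc,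
    sqrt_one_sub_sq_mul_sqrt_div ht]
  field_simp

lemma sqrt_one_sub_sq_mul_sqrt_eq_cot (ht : t ∈ Set.Ioc (-1) 1) (hβ : 0 < sin β)
    (htβ : cos (2 * β) ≤ t)
    (hz : z = -√((1 - t) / (1 + t)) * (cos β / sin β)) :
    √(1 - t ^ 2) * √(1 - z ^ 2) =
      2 * √((t - cos (2 * β)) / (1 - cos (2 * β))) *
        √((1 - t) / (1 - cos (2 * β))) * sin β := by
  obtain ⟨ht₁, ht₂⟩ := ht
  have h1t : 0 < 1 + t := by linarith
  have hz2 := one_sub_sq_of_eq_cot ⟨ht₁, ht₂⟩ hβ.ne' hz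
  rw [← sq_eq_sq₀ (by positivity) (by positivity), mul_pow, mul_pow, mul_pow, mul_pow,
    Real.sq_sqrt (by nlinarith), Real.sq_sqrt (by rw [hz2]; positivity),
    Real.sq_sqrt (by rw [one_sub_cos_two_mul]; positivity),
    Real.sq_sqrt (by rw [one_sub_cos_two_mul]; exact div_nonneg (by linarith) (by positivity)),
    hz2, one_sub_cos_two_mul]
  field_simp
  ring

end Cotangent

/-- For `t ∈ (-1,1)`, `β ∈ [β₀, π-β₀]` with `β₀ = (1/2) arccos t`, the commutator of
the canonical matrices `A`, `B` is `t + i √(1-t²) v̂(α,β)·σ⃗` with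
`v̂(α,β) = (√(1-z²) sin(α+β), √(1-z²) cos(α+β), z)`, `z = -√((1-t)/(1+t)) cot β`. -/
theorem commutator_formula (t α β : ℝ) (ht : t ∈ Set.Ioo (-1 : ℝ) 1)
    (hβ : β ∈ Set.Icc ((1 / 2) * Real.arccos t) (π - (1 / 2) * Real.arccos t))
    (A B : Matrix (Fin 2) (Fin 2) ℂ)
    (hA : A = ((Real.sqrt ((t - Real.cos (2 * β)) / (1 - Real.cos (2 * β))) : ℝ) : ℂ) •
        (((Real.cos α : ℝ) : ℂ) • (1 : Matrix (Fin 2) (Fin 2) ℂ) +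
          (Complex.I * ((Real.sin α : ℝ) : ℂ)) • σz) +
      (Complex.I * ((Real.sqrt ((1 - t) / (1 - Real.cos (2 * β))) : ℝ) : ℂ)) • σx)
    (hB : B = ((Real.cos β : ℝ) : ℂ) • (1 : Matrix (Fin 2) (Fin 2) ℂ) +
      (Complex.I * ((Real.sin β : ℝ) : ℂ)) • σz)
    (z : ℝ) (hz : z = -Real.sqrt ((1 - t) / (1 + t)) * (Real.cos β / Real.sin β))
    (v : Fin 3 → ℝ)
    (hv : v = ![Real.sqrt (1 - z ^ 2) * Real.sin (α + β),
                Real.sqrt (1 - z ^ 2) * Real.cos (α + β), z]) :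
    A * B * A⁻¹ * B⁻¹ =
      ((t : ℝ) : ℂ) • (1 : Matrix (Fin 2) (Fin 2) ℂ) +
        (Complex.I * ((Real.sqrt (1 - t ^ 2) : ℝ) : ℂ)) • dotPauli v := by
  have ht' : t ∈ Set.Ioc (-1) 1 := Set.Ioo_subset_Ioc_self ht
  have hsin := sin_pos_of_mem_Icc_half_arccos ht.2 hβ
  have hcos := cos_two_mul_le_of_mem_Icc_half_arccos (Set.Ioo_subset_Icc_self ht) hβ
  have hcos₁ : cos (2 * β) < 1 := by
    rw [← sub_pos, one_sub_cos_two_mul]; positivity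
  rw [show A = rotZX _ _ α from hA, show B = rotZ β from hB,
    rotZX_commutator_rotZ (sq_sqrt_add_sq_sqrt_eq_one hcos ht'.2 hcos₁),
    sq_sqrt_add_sq_sqrt_mul_eq hcos ht'.2 hcos₁, mul_smul, ofReal_smul_dotPauli, hv,
    Matrix.smul_vec3, ← sqrt_one_sub_sq_mul_eq_cot ht' hsin.ne' hz,
    ← sqrt_one_sub_sq_mul_sqrt_eq_cot ht' hsin hcos hz]
  simp only [smul_eq_mul, mul_assoc]
end
end

section
/- For ν, θ ∈ ℝ with cos²ν + sin²ν sin²θ > 0, let h = (cos²ν + sin²ν sin²θ)^{-1/2}(i σ_x cos ν - i σ_z sin ν sin θ) and a = i σ_z and B = cos ν + i sin ν (σ_x cos θ + σ_y sin θ). Then h ∈ SU(2), tr(h) = 0, and h anticommutes with aB: h(aB) = -(aB)h. -/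
/-! For real `v` let `P v = v₁ σx + v₂ σy + v₃ σz`. Since the Pauli matrices square to `1` and
pairwise anticommute, `P u * P v + P v * P u = 2 (u ⬝ v) • 1`; with `P v` Hermitian and
`det (P v) = -‖v‖²`, this puts `i P v` in SU(2) for a unit vector `v`, and makes `i P u` and `i P v`
anticommute when `u ⊥ v`. Now `h = i P (c cos ν, 0, -c sin ν sin θ)`, where the normalising factor
`c = (cos²ν + sin²ν sin²θ)^{-1/2}` makes the vector a unit vector, and
`a B = i P (sin ν sin θ, -sin ν cos θ, cos ν)`, which is orthogonal to it. -/

open Matrix Real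

noncomputable section

def pauli (x y z : ℝ) : Matrix (Fin 2) (Fin 2) ℂ := (x : ℂ) • σx + (y : ℂ) • σy + (z : ℂ) • σz

lemma pauli_eq (x y z : ℝ) :
    pauli x y z = !![(z : ℂ), x - Complex.I * y; x + Complex.I * y, -z] := by
  ext i j; fin_cases i <;> fin_cases j <;> simp [pauli, σx, σy, σz, sub_eq_add_neg] <;> ring

lemma conjTranspose_pauli (x y z : ℝ) : (pauli x y z)ᴴ = pauli x y z := by
  rw [pauli_eq]
  ext i j; fin_cases i <;> fin_cases j <;> simp [sub_eq_add_neg]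

lemma trace_pauli (x y z : ℝ) : (pauli x y z).trace = 0 := by
  simp [pauli_eq, trace_fin_two_of]

lemma pauli_mul_add_mul (x y z x' y' z' : ℝ) :
    pauli x y z * pauli x' y' z' + pauli x' y' z' * pauli x y z =
      ((2 * (x * x' + y * y' + z * z') : ℝ) : ℂ) • 1 := by
  rw [pauli_eq, pauli_eq]
  ext i j; fin_cases i <;> fin_cases j <;>
    simp <;> ring_nf <;> simp [Complex.I_sq, add_comm]

lemma pauli_mul_self (x y z : ℝ) :
    pauli x y z * pauli x y z = ((x ^ 2 + y ^ 2 + z ^ 2 : ℝ) : ℂ) • 1 := by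
  have h := pauli_mul_add_mul x y z x y z
  rw [← two_smul ℂ, show ((2 * (x * x + y * y + z * z) : ℝ) : ℂ) =
    2 * ((x ^ 2 + y ^ 2 + z ^ 2 : ℝ) : ℂ) by push_cast; ring, mul_smul] at h
  exact smul_right_injective _ two_ne_zero h

lemma det_pauli (x y z : ℝ) : (pauli x y z).det = -((x ^ 2 + y ^ 2 + z ^ 2 : ℝ) : ℂ) := by
  rw [pauli_eq, det_fin_two_of]; push_cast; ring_nf; simp [Complex.I_sq]; ring

lemma I_smul_pauli_mem_specialUnitaryGroup {x y z : ℝ} (h : x ^ 2 + y ^ 2 + z ^ 2 = 1) :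
    Complex.I • pauli x y z ∈ specialUnitaryGroup (Fin 2) ℂ := by
  rw [mem_specialUnitaryGroup_iff, mem_unitaryGroup_iff', star_eq_conjTranspose,
    conjTranspose_smul, conjTranspose_pauli, smul_mul_smul_comm, pauli_mul_self, h, det_smul,
    det_pauli, h]
  simp

lemma I_smul_pauli_anticomm {x y z x' y' z' : ℝ} (h : x * x' + y * y' + z * z' = 0) :
    Complex.I • pauli x y z * (Complex.I • pauli x' y' z') =
      -(Complex.I • pauli x' y' z' * (Complex.I • pauli x y z)) := by
  rw [smul_mul_smul_comm, smul_mul_smul_comm, ← smul_neg]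
  congr 1
  exact eq_neg_of_add_eq_zero_left (by rw [pauli_mul_add_mul, h]; simp)

lemma rpow_neg_one_half_sq_mul {D : ℝ} (hD : 0 < D) : (D ^ (-(1 : ℝ) / 2)) ^ 2 * D = 1 := by
  rw [← rpow_natCast, ← rpow_mul hD.le]
  norm_num
  rw [rpow_neg_one, inv_mul_cancel₀ hD.ne']

lemma ofReal_smul_sub_eq_I_smul_pauli (c x z : ℝ) :
    (c : ℂ) • ((Complex.I * x) • σx - (Complex.I * z) • σz) =
      Complex.I • pauli (c * x) 0 (-(c * z)) := by
  ext i j; fin_cases i <;> fin_cases j <;> simp [pauli, σx, σy, σz] <;> ring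

lemma I_smul_σz_mul_eq_I_smul_pauli (c s x y : ℝ) :
    Complex.I • σz * ((c : ℂ) • 1 + (Complex.I * s) • ((x : ℂ) • σx + (y : ℂ) • σy)) =
      Complex.I • pauli (s * y) (-(s * x)) c := by
  ext i j; fin_cases i <;> fin_cases j <;>
    simp [pauli, σx, σy, σz, Matrix.mul_apply, Fin.sum_univ_two, Matrix.one_apply] <;>
    ring_nf <;> simp [Complex.I_sq, add_comm]

/-- With `h = (cos²ν + sin²ν sin²θ)^{-1/2}(i σx cos ν - i σz sin ν sin θ)`,
`a = i σz`, `B = cos ν + i sin ν (σx cos θ + σy sin θ)`: `h ∈ SU(2)`, `tr h = 0`,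
and `h` anticommutes with `aB`. -/
theorem h_in_SU2_traceless_anticommutes (ν θ : ℝ)
    (hpos : 0 < cos ν ^ 2 + sin ν ^ 2 * sin θ ^ 2)
    (h a B : Matrix (Fin 2) (Fin 2) ℂ)
    (hh : h = (((cos ν ^ 2 + sin ν ^ 2 * sin θ ^ 2) ^ (-(1 : ℝ) / 2) : ℝ) : ℂ) •
      ((Complex.I * (cos ν : ℂ)) • σx - (Complex.I * ((sin ν * sin θ : ℝ) : ℂ)) • σz))
    (hA : a = Complex.I • σz)
    (hB : B = ((cos ν : ℝ) : ℂ) • (1 : Matrix (Fin 2) (Fin 2) ℂ) +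
      (Complex.I * ((sin ν : ℝ) : ℂ)) •
        (((cos θ : ℝ) : ℂ) • σx + ((sin θ : ℝ) : ℂ) • σy)) :
    h ∈ Matrix.specialUnitaryGroup (Fin 2) ℂ ∧
    Matrix.trace h = 0 ∧
    h * (a * B) = -((a * B) * h) := by
  have hnorm := rpow_neg_one_half_sq_mul hpos
  subst hh hA hB
  rw [ofReal_smul_sub_eq_I_smul_pauli, I_smul_σz_mul_eq_I_smul_pauli]
  refine ⟨I_smul_pauli_mem_specialUnitaryGroup ?_, by rw [trace_smul, trace_pauli, smul_zero],
    I_smul_pauli_anticomm ?_⟩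
  · linear_combination hnorm
  · ring
end
end
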